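/- Let h be a nonzero even integer and let Q₀ := log^{A'} X with A' > 0. Then, for all but at most O(H Q₀^{-1/3}) values of h with 0 < |h| ≤ H, one has ∑_{q ≤ Q₀} μ²(q) c_q(−h) / φ²(q) = 𝔖(h) + O(Q₀^{-1/3} log H). -/

import Mathlib

open Filter MeasureTheory Real
open scoped Classical

noncomputable section

/-- `e(x) = exp(2πix)`. -/
def eu (x : ℝ) : ℂ := Complex.exp (2 * Real.pi * Complex.I * x)

/-- The twin prime constant `Π₂ = ∏_{p > 2} (1 - 1/(p-1)²)`. -/
def twinPrimeConst : ℝ :=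
  ∏' p : Nat.Primes, if 2 < (p : ℕ) then (1 - 1 / ((p : ℝ) - 1) ^ 2) else 1

/-- The singular series `𝔖(h)`, equal to `2Π₂ ∏_{p ∣ h, p > 2} (p-1)/(p-2)` for even `h`
and `0` for odd `h`. -/
def singularSeries (h : ℤ) : ℝ :=
  if 2 ∣ h then
    2 * twinPrimeConst *
      ∏ p ∈ h.natAbs.primeFactors.filter (fun p => 2 < p), ((p : ℝ) - 1) / ((p : ℝ) - 2)
  else 0

/-- `n ∈ E₂'(P)`: `n = p₁p₂` with `p₁, p₂` prime and `p₁ ∈ (P, P^{1+δ}]`. -/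
def IsE2' (P δ : ℝ) (n : ℕ) : Prop :=
  ∃ p₁ p₂ : ℕ, p₁.Prime ∧ p₂.Prime ∧ n = p₁ * p₂ ∧ P < (p₁ : ℝ) ∧ (p₁ : ℝ) ≤ P ^ (1 + δ)

/-- Indicator function of `E₂'(P)`. -/
def indE2' (P δ : ℝ) (n : ℕ) : ℝ := if IsE2' P δ n then 1 else 0

/-- `n ∈ E₂''(X)`: `n = p₁p₂ ∈ (X, 2X]` with `p₁ ≤ p₂` primes and `p₁ ∈ [P₁, P₂]`. -/
def IsE2'' (P₁ P₂ X : ℝ) (n : ℕ) : Prop :=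
  ∃ p₁ p₂ : ℕ, p₁.Prime ∧ p₂.Prime ∧ n = p₁ * p₂ ∧ p₁ ≤ p₂ ∧
    P₁ ≤ (p₁ : ℝ) ∧ (p₁ : ℝ) ≤ P₂ ∧ X < (n : ℝ) ∧ (n : ℝ) ≤ 2 * X

/-- Indicator function of `E₂''(X)`. -/
def indE2'' (P₁ P₂ X : ℝ) (n : ℕ) : ℝ := if IsE2'' P₁ P₂ X n then 1 else 0

/-- The weight `ϖ₂(n) = log p₂` if `n = p₁p₂` with `p₁, p₂` prime, `P < p₁ ≤ P^{1+δ}`, and `0`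
otherwise. -/
def varpi2 (P δ : ℝ) (n : ℕ) : ℝ :=
  if h : ∃ p : ℕ × ℕ, p.1.Prime ∧ p.2.Prime ∧ n = p.1 * p.2 ∧
      P < (p.1 : ℝ) ∧ (p.1 : ℝ) ≤ P ^ (1 + δ)
  then Real.log h.choose.2 else 0

/-- The weight `ϖ₂(n) = log p₂` if `n = p₁p₂` with primes `p₁ ≤ p₂`, `p₁ ∈ [P₁, P₂]`, and `0`
otherwise. -/
def varpi2' (P₁ P₂ : ℝ) (n : ℕ) : ℝ :=
  if h : ∃ p : ℕ × ℕ, p.1.Prime ∧ p.2.Prime ∧ n = p.1 * p.2 ∧ p.1 ≤ p.2 ∧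
      P₁ ≤ (p.1 : ℝ) ∧ (p.1 : ℝ) ≤ P₂
  then Real.log h.choose.2 else 0

/-- The exponential sum `S(α) = ∑_{X < n ≤ 2X} w(n) e(nα)`. -/
def expS (w : ℕ → ℝ) (X α : ℝ) : ℂ :=
  ∑ n ∈ Finset.Ioc ⌊X⌋₊ ⌊2 * X⌋₊, (w n : ℂ) * eu (n * α)

/-- The minor arcs: `α ∈ (0,1)` with `|α - a/q| ≤ 1/(qQ)` for some `Q₀ < q ≤ Q`, `a < q`,
`(a, q) = 1`. -/
def minorArcs (Q₀ Q : ℝ) : Set ℝ :=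
  {α | α ∈ Set.Ioo (0 : ℝ) 1 ∧
    ∃ a q : ℕ, Q₀ < (q : ℝ) ∧ (q : ℝ) ≤ Q ∧ a < q ∧ Nat.Coprime a q ∧
      |α - (a : ℝ) / q| ≤ 1 / (q * Q)}

/-- The major arcs: `α ∈ (0,1)` with `|α - a/q| ≤ 1/(qQ)` for some `1 ≤ q ≤ Q₀`, `a < q`,
`(a, q) = 1`. -/
def majorArcs (Q₀ Q : ℝ) : Set ℝ :=
  {α | α ∈ Set.Ioo (0 : ℝ) 1 ∧
    ∃ a q : ℕ, 1 ≤ q ∧ (q : ℝ) ≤ Q₀ ∧ a < q ∧ Nat.Coprime a q ∧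
      |α - (a : ℝ) / q| ≤ 1 / (q * Q)}

/-- `∑_{P < p ≤ P'} 1/p`, a sum over primes. -/
def primeRecipSum (P P' : ℝ) : ℝ :=
  ∑ p ∈ (Finset.Ioc ⌊P⌋₊ ⌊P'⌋₊).filter Nat.Prime, 1 / (p : ℝ)

/-- `∑_{P₁ ≤ p ≤ P₂} 1/p`, a sum over primes. -/
def primeRecipSum' (P₁ P₂ : ℝ) : ℝ :=
  ∑ p ∈ (Finset.Icc ⌈P₁⌉₊ ⌊P₂⌋₊).filter Nat.Prime, 1 / (p : ℝ)

/-- The Ramanujan sum `c_q(n) = ∑_{1 ≤ a ≤ q, (a,q)=1} e(an/q)`. -/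
def ramanujanSum (q : ℕ) (n : ℤ) : ℂ :=
  ∑ a ∈ (Finset.Icc 1 q).filter (fun a => Nat.Coprime a q), eu ((a : ℝ) * (n : ℝ) / q)

/-- The Gauss sum of the conjugate character, `τ(χ̄) = ∑_{n=1}^q e(n/q) χ̄(n)`. -/
def gaussConj {q : ℕ} (χ : DirichletCharacter ℂ q) : ℂ :=
  ∑ n ∈ Finset.Icc 1 q, eu ((n : ℝ) / q) * (starRingEnd ℂ) (χ (n : ZMod q))

/-- `α` admits a major-arc rational approximation `a/q` with `1 ≤ q ≤ Q₀`, `a < q`,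
`(a,q) = 1`, `|α - a/q| ≤ 1/(qQ)`. -/
def majorApprox (Q₀ Q : ℝ) (α : ℝ) : Prop :=
  ∃ p : ℕ × ℕ, 1 ≤ p.2 ∧ (p.2 : ℝ) ≤ Q₀ ∧ p.1 < p.2 ∧ Nat.Coprime p.1 p.2 ∧
    |α - (p.1 : ℝ) / p.2| ≤ 1 / (p.2 * Q)

/-- The major-arc main-term function
`a(α) = (μ(q)/φ(q)) (∑_{P<p≤P^{1+δ}} 1/p) ∑_{X<n≤2X} e(βn)` for `α = a/q + β` on the major
arcs (and `0` off the major arcs). -/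
def aFun (P δ Q₀ Q X : ℝ) (α : ℝ) : ℂ :=
  if h : majorApprox Q₀ Q α then
    ((ArithmeticFunction.moebius h.choose.2 : ℤ) : ℂ) / (Nat.totient h.choose.2 : ℂ) *
      (primeRecipSum P (P ^ (1 + δ)) : ℂ) *
      ∑ n ∈ Finset.Ioc ⌊X⌋₊ ⌊2 * X⌋₊, eu ((α - (h.choose.1 : ℝ) / h.choose.2) * n)
  else 0

/-- Auxiliary function: the value of `b(α)` for `α = a/q + β`. -/
def bAux (P δ X : ℝ) (a q : ℕ) (β : ℝ) : ℂ :=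
  if hq : q = 0 then 0 else
    haveI : NeZero q := ⟨hq⟩
    (1 / (Nat.totient q : ℂ)) *
      ∑ χ : DirichletCharacter ℂ q, gaussConj χ * χ (a : ZMod q) *
        ∑ n ∈ Finset.Ioc ⌊X⌋₊ ⌊2 * X⌋₊,
          ((varpi2 P δ n : ℝ) * χ (n : ZMod q) -
            (if χ = 1 then (primeRecipSum P (P ^ (1 + δ)) : ℂ) else 0)) * eu (β * n)

/-- The major-arc error function `b(α)` (and `0` off the major arcs). -/
def bFun (P δ Q₀ Q X : ℝ) (α : ℝ) : ℂ :=
  if h : majorApprox Q₀ Q α then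
    bAux P δ X h.choose.1 h.choose.2 (α - (h.choose.1 : ℝ) / h.choose.2)
  else 0

/-- `A²(X) = ∫_𝔐 |a(α)|² dα`. -/
def Asq (P δ Q₀ Q X : ℝ) : ℝ := ∫ α in majorArcs Q₀ Q, ‖aFun P δ Q₀ Q X α‖ ^ 2

/-- `B²(X) = ∫_𝔐 |b(α)|² dα`. -/
def Bsq (P δ Q₀ Q X : ℝ) : ℝ := ∫ α in majorArcs Q₀ Q, ‖bFun P δ Q₀ Q X α‖ ^ 2

/-- The short character sum `∑_{x < n ≤ x+y} (χ(n)ϖ₂(n) - δ_χ ∑_{P<p≤P^{1+δ}} 1/p)`. -/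
def shortCharSum (P δ : ℝ) {q : ℕ} (χ : DirichletCharacter ℂ q) (x y : ℝ) : ℂ :=
  ∑ n ∈ Finset.Ioc ⌊x⌋₊ ⌊x + y⌋₊,
    ((varpi2 P δ n : ℝ) * χ (n : ZMod q) -
      (if χ = 1 then (primeRecipSum P (P ^ (1 + δ)) : ℂ) else 0))

/-- Sum over moduli `1 ≤ q ≤ Q₀` and all Dirichlet characters mod `q`, weighted by `q/φ(q)`. -/
def qCharSum (Q₀ : ℝ) (f : (q : ℕ) → DirichletCharacter ℂ q → ℝ) : ℝ :=
  ∑ q ∈ Finset.Icc 1 ⌊Q₀⌋₊,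
    if hq : q = 0 then 0 else
      haveI : NeZero q := ⟨hq⟩
      ((q : ℝ) / (Nat.totient q : ℝ)) * ∑ χ : DirichletCharacter ℂ q, f q χ

/-- `Δ = X/T₀³` with `T₀ = X^{1/100}`. -/
def DeltaX (X : ℝ) : ℝ := X / (X ^ ((1 : ℝ) / 100)) ^ 3

/-- The quantity `B₁(X)`. -/
def B1X (P δ Q₀ Q X : ℝ) : ℝ :=
  qCharSum Q₀ (fun q χ => ∫ x in X..(2 * X),
    ‖(2 / (q * Q) : ℝ) * shortCharSum P δ χ x (q * Q / 2) -
      (2 / (q * DeltaX X) : ℝ) * shortCharSum P δ χ x (q * DeltaX X / 2)‖ ^ 2)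

/-- The quantity `B₂(X)`. -/
def B2X (P δ Q₀ X : ℝ) : ℝ :=
  qCharSum Q₀ (fun q χ => ∫ x in X..(2 * X),
    ‖(2 / (q * DeltaX X) : ℝ) * shortCharSum P δ χ x (q * DeltaX X / 2)‖ ^ 2)

/-- The Dirichlet polynomial
`F(s,χ) = ∑_{X < p₁p₂ ≤ 2X, P < p₁ ≤ P^{1+δ}} χ(p₁)χ(p₂)/(p₁p₂)^s`. -/
def Fpoly (X P δ : ℝ) {q : ℕ} (χ : DirichletCharacter ℂ q) (s : ℂ) : ℂ :=
  ∑ p₁ ∈ (Finset.Ioc ⌊P⌋₊ ⌊P ^ (1 + δ)⌋₊).filter Nat.Prime,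
    ∑ p₂ ∈ (Finset.Ioc 0 ⌊2 * X⌋₊).filter
      (fun p₂ => p₂.Prime ∧ X < ((p₁ * p₂ : ℕ) : ℝ) ∧ ((p₁ * p₂ : ℕ) : ℝ) ≤ 2 * X),
      χ (p₁ : ZMod q) * χ (p₂ : ZMod q) / ((p₁ * p₂ : ℕ) : ℂ) ^ s

/-- `B₃(X) = ∑_{q ≤ Q₀} (q/φ(q)) ∑_{χ mod q} ∫_{T₀}^T |F(1+it,χ)|² dt`. -/
def B3X (X P δ Q₀ T₀ T : ℝ) : ℝ :=
  qCharSum Q₀ (fun q χ => ∫ t in T₀..T, ‖Fpoly X P δ χ (1 + t * Complex.I)‖ ^ 2)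

/-- `G_v(s,χ) = ∑_{e^{v/U} < p ≤ e^{(v+1)/U}} χ(p)/p^s`. -/
def Gpoly (U : ℝ) (v : ℕ) {q : ℕ} (χ : DirichletCharacter ℂ q) (s : ℂ) : ℂ :=
  ∑ p ∈ (Finset.Ioc ⌊Real.exp (v / U)⌋₊ ⌊Real.exp ((v + 1) / U)⌋₊).filter Nat.Prime,
    χ (p : ZMod q) / ((p : ℕ) : ℂ) ^ s

/-- `H_v(s,χ) = ∑_{Xe^{-v/U} < p ≤ 2Xe^{-v/U}} χ(p)/p^s`. -/
def Hpoly (X U : ℝ) (v : ℕ) {q : ℕ} (χ : DirichletCharacter ℂ q) (s : ℂ) : ℂ :=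
  ∑ p ∈ (Finset.Ioc ⌊X * Real.exp (-(v : ℝ) / U)⌋₊ ⌊2 * X * Real.exp (-(v : ℝ) / U)⌋₊).filter
      Nat.Prime,
    χ (p : ZMod q) / ((p : ℕ) : ℂ) ^ s

/-- A generic Dirichlet polynomial `∑_{N < n ≤ 2N} χ(n)/n^s` or `∑_{N < n ≤ 2N} χ(n)(log n)/n^s`
according to the flag `useLog`. -/
def NpolyGen (useLog : Bool) (N : ℝ) {q : ℕ} (χ : DirichletCharacter ℂ q) (s : ℂ) : ℂ :=
  ∑ n ∈ Finset.Ioc ⌊N⌋₊ ⌊2 * N⌋₊,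
    (if useLog then (Real.log n : ℂ) else 1) * χ (n : ZMod q) / ((n : ℕ) : ℂ) ^ s

/-- A Dirichlet polynomial `∑_{M < m ≤ 2M} a_m χ(m)/m^s` with arbitrary coefficients. -/
def MpolyGen (a : ℕ → ℂ) (M : ℝ) {q : ℕ} (χ : DirichletCharacter ℂ q) (s : ℂ) : ℂ :=
  ∑ m ∈ Finset.Ioc ⌊M⌋₊ ⌊2 * M⌋₊, a m * χ (m : ZMod q) / ((m : ℕ) : ℂ) ^ s

/-- The set `𝒯_{1,χ} = {t ∈ [T₀,T] : |G_{v₀}(1+it,χ)| ≤ e^{-α₁v₀/U}}`. -/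
def T1set (U : ℝ) (v₀ : ℕ) {q : ℕ} (χ : DirichletCharacter ℂ q) (T₀ T α₁ : ℝ) : Set ℝ :=
  {t ∈ Set.Icc T₀ T | ‖Gpoly U v₀ χ (1 + t * Complex.I)‖ ≤ Real.exp (-α₁ * v₀ / U)}

/-- `H` lies (eventually) in the range `log^{19+ε} X ≤ H ≤ exp((log X)^{o(1)})`. -/
def SmallHRange (H : ℝ → ℝ) : Prop :=
  ∃ f : ℝ → ℝ, Tendsto f atTop (nhds 0) ∧
    ∀ᶠ X in atTop, H X ≤ Real.exp ((Real.log X) ^ f X)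

/-- `H` lies (eventually) in the range `exp((log X)^{o(1)}) < H`. -/
def LargeHRange (H : ℝ → ℝ) : Prop :=
  ∀ c : ℝ, 0 < c → ∀ᶠ X in atTop, Real.exp ((Real.log X) ^ c) < H X

end

/-!
By Ramanujan's formula `c_q(h) = ∑_{d ∣ (q, h)} d μ(q/d)`, the terms `μ²(q) c_q(h) / φ²(q)` form a
multiplicative function of `q`, supported on squarefree `q`, whose local factor `1 + c_p(h)/(p-1)²`
is `2` at `p = 2`, `1 - 1/(p-1)²` for odd `p ∤ h` and `p/(p-1)` for odd `p ∣ h`; so the Euler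
product of the full series is `𝔖(h)`.

The `q`-th term is at most `μ²(q) φ(q)⁻² ∑_{d ∣ (q, h)} d`, and summing this over `0 < |h| ≤ H`
gives at most `2H μ²(q) d(q) / φ²(q)`. Since `d(q) = 2^ω(q)`, `φ(q) ≥ q / 2^ω(q)` and
`8^ω(q) ≪ q^{1/4}`, Rankin's trick gives `∑_{q > Q₀} μ²(q) d(q) / φ²(q) ≪ Q₀^{-2/3}`. Hence the
tails of the series have total size `O(H Q₀^{-2/3})` over all `h`, and by Markov's inequality at
most `O(H Q₀^{-1/3})` of them exceed `Q₀^{-1/3}`.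
-/

open ArithmeticFunction Finset
open scoped ArithmeticFunction.Moebius

lemma eu_natCast_mul_intCast_div (b m : ℕ) (n : ℤ) :
    eu (b * n / m) = (Complex.exp (2 * π * Complex.I / m) ^ n) ^ b := by
  rw [eu, ← zpow_natCast, ← zpow_mul, ← Complex.exp_int_mul]
  push_cast
  ring_nf

lemma sum_Icc_eu_mul_div {m : ℕ} (hm : m ≠ 0) (n : ℤ) :
    ∑ b ∈ Icc 1 m, eu (b * n / m) = if (m : ℤ) ∣ n then (m : ℂ) else 0 := by
  have hζ := Complex.isPrimitiveRoot_exp m hm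
  simp_rw [eu_natCast_mul_intCast_div]
  split_ifs with hmn
  · simp [(hζ.zpow_eq_one_iff_dvd n).mpr hmn]
  · set z := Complex.exp (2 * π * Complex.I / m) ^ n
    have hz1 : z ≠ 1 := fun h => hmn ((hζ.zpow_eq_one_iff_dvd n).mp h)
    have hzm : z ^ m = 1 := by
      rw [← zpow_natCast, ← zpow_mul, mul_comm n, zpow_mul, zpow_natCast, hζ.pow_eq_one, one_zpow]
    rw [← Ico_add_one_right_eq_Icc, geom_sum_Ico hz1 (by omega), pow_succ, hzm]
    simp

lemma sum_filter_dvd_Icc {M : Type*} [AddCommMonoid M] {d q : ℕ} (hd : d ∣ q) (hq : q ≠ 0)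
    (f : ℕ → M) : ∑ a ∈ (Icc 1 q).filter (d ∣ ·), f a = ∑ b ∈ Icc 1 (q / d), f (d * b) := by
  have hd0 : 0 < d := Nat.pos_of_dvd_of_pos hd (Nat.pos_of_ne_zero hq)
  symm
  refine sum_nbij' (d * ·) (· / d) (fun b hb => ?_) (fun a ha => ?_) (fun b _ => ?_)
    (fun a ha => ?_) (fun _ _ => rfl)
  · simp only [mem_Icc, mem_filter] at hb ⊢
    refine ⟨⟨?_, ?_⟩, dvd_mul_right d b⟩
    · nlinarith
    · calc d * b ≤ d * (q / d) := Nat.mul_le_mul_left d hb.2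
        _ = q := Nat.mul_div_cancel' hd
  · simp only [mem_Icc, mem_filter] at ha ⊢
    obtain ⟨⟨h1, h2⟩, c, rfl⟩ := ha
    rw [Nat.mul_div_cancel_left c hd0]
    refine ⟨Nat.pos_of_ne_zero ?_, ?_⟩
    · rintro rfl
      simp at h1
    · exact (Nat.le_div_iff_mul_le hd0).mpr (by linarith)
  · exact Nat.mul_div_cancel_left b hd0
  · simp only [mem_filter] at ha
    exact Nat.mul_div_cancel' ha.2

lemma sum_moebius_filter_dvd (a : ℕ) {q : ℕ} (hq : q ≠ 0) :
    ∑ d ∈ q.divisors.filter (· ∣ a), μ d = if a.Coprime q then 1 else 0 := by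
  have hgcd : q.divisors.filter (· ∣ a) = (a.gcd q).divisors := by
    ext d
    simp only [mem_filter, Nat.mem_divisors, Nat.dvd_gcd_iff]
    constructor
    · rintro ⟨⟨hdq, -⟩, hda⟩; exact ⟨⟨hda, hdq⟩, Nat.gcd_ne_zero_right hq⟩
    · rintro ⟨⟨hda, hdq⟩, -⟩; exact ⟨⟨hdq, hq⟩, hda⟩
  rw [hgcd, ← coe_mul_zeta_apply, moebius_mul_coe_zeta, one_apply]

lemma ramanujanSum_eq_sum_divisors {q : ℕ} (hq : q ≠ 0) (n : ℤ) :
    ramanujanSum q n =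
      ∑ d ∈ q.divisors, (μ d : ℂ) * if ((q / d : ℕ) : ℤ) ∣ n then ((q / d : ℕ) : ℂ) else 0 := by
  calc ramanujanSum q n
      = ∑ a ∈ Icc 1 q, ∑ d ∈ q.divisors.filter (· ∣ a), (μ d : ℂ) * eu (a * n / q) := by
        rw [ramanujanSum, sum_filter]
        refine sum_congr rfl fun a _ => ?_
        rw [← sum_mul, ← Int.cast_sum, sum_moebius_filter_dvd a hq]
        split_ifs <;> simp
    _ = ∑ d ∈ q.divisors, (μ d : ℂ) * ∑ a ∈ (Icc 1 q).filter (d ∣ ·), eu (a * n / q) := by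
        simp_rw [sum_filter, mul_sum, mul_ite, mul_zero]
        exact sum_comm
    _ = _ := by
        refine sum_congr rfl fun d hd => ?_
        have hdq := Nat.dvd_of_mem_divisors hd
        have hd0 := (Nat.pos_of_mem_divisors hd).ne'
        rw [sum_filter_dvd_Icc hdq hq,
          ← sum_Icc_eu_mul_div ((Nat.div_ne_zero_iff_of_dvd hdq).mpr ⟨hq, hd0⟩)]
        refine congrArg _ (sum_congr rfl fun b _ => congrArg eu ?_)
        rw [Nat.cast_div hdq (by exact_mod_cast hd0)]
        push_cast
        field_simp

def idOfDvd (n : ℕ) : ArithmeticFunction ℤ :=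
  ⟨fun e => if e ∣ n then (e : ℤ) else 0, by simp⟩

lemma idOfDvd_apply (n e : ℕ) : idOfDvd n e = if e ∣ n then (e : ℤ) else 0 := rfl

lemma idOfDvd_nonneg (n e : ℕ) : 0 ≤ idOfDvd n e := by
  rw [idOfDvd_apply]; split_ifs <;> simp

lemma isMultiplicative_idOfDvd (n : ℕ) : (idOfDvd n).IsMultiplicative := by
  refine ⟨by simp [idOfDvd_apply], fun {a b} hab => ?_⟩
  have hdvd : a * b ∣ n ↔ a ∣ n ∧ b ∣ n :=
    ⟨fun h => ⟨dvd_of_mul_right_dvd h, dvd_of_mul_left_dvd h⟩,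
      fun h => hab.mul_dvd_of_dvd_of_dvd h.1 h.2⟩
  by_cases ha : a ∣ n <;> by_cases hb : b ∣ n <;> simp [idOfDvd_apply, hdvd, ha, hb]

lemma ramanujanSum_eq_moebius_mul_idOfDvd {q : ℕ} (hq : q ≠ 0) (n : ℤ) :
    ramanujanSum q n = ((μ * idOfDvd n.natAbs) q : ℂ) := by
  rw [ramanujanSum_eq_sum_divisors hq, mul_apply,
    Nat.sum_divisorsAntidiagonal (fun a b => μ a * idOfDvd n.natAbs b)]
  simp only [idOfDvd_apply, ← Int.natCast_dvd, Int.cast_sum, Int.cast_mul,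
    apply_ite (Int.cast : ℤ → ℂ), Int.cast_natCast, Int.cast_zero]

noncomputable def singularTerm (n q : ℕ) : ℝ :=
  (μ q : ℝ) ^ 2 * ((μ * idOfDvd n) q : ℝ) / (q.totient : ℝ) ^ 2

lemma singularTerm_zero (n : ℕ) : singularTerm n 0 = 0 := by simp [singularTerm]

lemma singularTerm_one (n : ℕ) : singularTerm n 1 = 1 := by
  simp [singularTerm, (isMultiplicative_moebius.mul (isMultiplicative_idOfDvd n)).map_one]

lemma singularTerm_mul {n m k : ℕ} (hmk : m.Coprime k) :
    singularTerm n (m * k) = singularTerm n m * singularTerm n k := by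
  simp only [singularTerm, isMultiplicative_moebius.map_mul_of_coprime hmk,
    (isMultiplicative_moebius.mul (isMultiplicative_idOfDvd n)).map_mul_of_coprime hmk,
    Nat.totient_mul hmk]
  push_cast
  ring

lemma moebius_mul_idOfDvd_prime (n : ℕ) {p : ℕ} (hp : p.Prime) :
    (μ * idOfDvd n) p = (if p ∣ n then (p : ℤ) else 0) - 1 := by
  rw [mul_apply, Nat.sum_divisorsAntidiagonal (fun a b => μ a * idOfDvd n b), hp.divisors,
    sum_pair hp.one_lt.ne, Nat.div_one, Nat.div_self hp.pos, moebius_apply_one,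
    moebius_apply_prime hp, idOfDvd_apply, idOfDvd_apply]
  simp only [one_dvd, if_true]
  ring

lemma singularTerm_prime (n : ℕ) {p : ℕ} (hp : p.Prime) :
    singularTerm n p = ((if p ∣ n then (p : ℝ) else 0) - 1) / ((p : ℝ) - 1) ^ 2 := by
  rw [singularTerm, moebius_mul_idOfDvd_prime n hp, moebius_apply_prime hp, Nat.totient_prime hp,
    Nat.cast_sub hp.one_le]
  push_cast [apply_ite (Int.cast : ℤ → ℝ)]
  ring

lemma singularTerm_prime_pow (n : ℕ) {p e : ℕ} (hp : p.Prime) (he : 2 ≤ e) :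
    singularTerm n (p ^ e) = 0 := by
  rw [singularTerm, moebius_apply_prime_pow hp (by omega), if_neg (by omega)]
  simp

noncomputable def twinPrimeFactor (p : ℕ) : ℝ := if 2 < p then 1 - 1 / ((p : ℝ) - 1) ^ 2 else 1

noncomputable def singularFactor (p : ℕ) : ℝ := if 2 < p then ((p : ℝ) - 1) / ((p : ℝ) - 2) else 2

lemma singularFactor_ne_zero (p : ℕ) : singularFactor p ≠ 0 := by
  unfold singularFactor
  split_ifs with hp
  · have : (2 : ℝ) < p := by exact_mod_cast hp
    exact div_ne_zero (by linarith) (by linarith)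
  · norm_num

lemma one_add_singularTerm_prime {n p : ℕ} (hn : 2 ∣ n) (hp : p.Prime) :
    1 + singularTerm n p = twinPrimeFactor p * if p ∣ n then singularFactor p else 1 := by
  rw [singularTerm_prime n hp, twinPrimeFactor, singularFactor]
  rcases eq_or_ne p 2 with rfl | hp2
  · norm_num [hn]
  have h2p : 2 < p := lt_of_le_of_ne hp.two_le hp2.symm
  have h3 : (3 : ℝ) ≤ p := by exact_mod_cast h2p
  have h1 : (p : ℝ) - 1 ≠ 0 := by linarith
  have h2 : (p : ℝ) - 2 ≠ 0 := by linarith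
  simp only [if_pos h2p]
  split_ifs <;> field_simp <;> ring

lemma abs_moebius_mul_idOfDvd_le (n q : ℕ) :
    |(μ * idOfDvd n) q| ≤ ∑ d ∈ q.divisors, idOfDvd n d := by
  rw [mul_comm, mul_apply, Nat.sum_divisorsAntidiagonal (fun a b => idOfDvd n a * μ b)]
  refine (abs_sum_le_sum_abs _ _).trans (sum_le_sum fun d _ => ?_)
  rw [abs_mul, abs_of_nonneg (idOfDvd_nonneg n d)]
  exact mul_le_of_le_one_right (idOfDvd_nonneg n d) abs_moebius_le_one

lemma idOfDvd_le {n : ℕ} (hn : n ≠ 0) (e : ℕ) : idOfDvd n e ≤ n := by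
  rw [idOfDvd_apply]
  split_ifs with he
  · exact_mod_cast Nat.le_of_dvd (Nat.pos_of_ne_zero hn) he
  · positivity

noncomputable def singularMajorant (n q : ℕ) : ℝ :=
  (μ q : ℝ) ^ 2 * ((∑ d ∈ q.divisors, idOfDvd n d : ℤ) : ℝ) / (q.totient : ℝ) ^ 2

noncomputable def divisorWeight (q : ℕ) : ℝ :=
  (μ q : ℝ) ^ 2 * (#q.divisors : ℝ) / (q.totient : ℝ) ^ 2

lemma singularMajorant_nonneg (n q : ℕ) : 0 ≤ singularMajorant n q := by
  have : (0 : ℝ) ≤ ((∑ d ∈ q.divisors, idOfDvd n d : ℤ) : ℝ) :=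
    Int.cast_nonneg (sum_nonneg fun d _ => idOfDvd_nonneg n d)
  unfold singularMajorant
  positivity

lemma divisorWeight_nonneg (q : ℕ) : 0 ≤ divisorWeight q := by
  unfold divisorWeight
  positivity

lemma abs_singularTerm_le (n q : ℕ) : |singularTerm n q| ≤ singularMajorant n q := by
  rw [singularTerm, singularMajorant, abs_div, abs_mul, abs_sq, abs_sq]
  gcongr
  exact_mod_cast abs_moebius_mul_idOfDvd_le n q

lemma singularMajorant_le {n : ℕ} (hn : n ≠ 0) (q : ℕ) :
    singularMajorant n q ≤ n * divisorWeight q := by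
  have hsum : ∑ d ∈ q.divisors, idOfDvd n d ≤ #q.divisors * n := by
    simpa using sum_le_card_nsmul _ _ _ fun d _ => idOfDvd_le hn d
  calc singularMajorant n q
      ≤ (μ q : ℝ) ^ 2 * ((#q.divisors * n : ℤ) : ℝ) / (q.totient : ℝ) ^ 2 := by
        unfold singularMajorant
        gcongr
    _ = n * divisorWeight q := by
        unfold divisorWeight
        push_cast
        ring

lemma le_two_pow_card_primeFactors_mul_totient (n : ℕ) : n ≤ 2 ^ #n.primeFactors * n.totient := by
  have hprod : ∏ p ∈ n.primeFactors, p ≤ 2 ^ #n.primeFactors * ∏ p ∈ n.primeFactors, (p - 1) := by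
    rw [← prod_const, ← prod_mul_distrib]
    exact prod_le_prod' fun p hp => by have := (Nat.prime_of_mem_primeFactors hp).two_le; omega
  refine Nat.le_of_mul_le_mul_right (c := ∏ p ∈ n.primeFactors, p) ?_
    (prod_pos fun p hp => (Nat.prime_of_mem_primeFactors hp).pos)
  calc n * ∏ p ∈ n.primeFactors, p ≤ n * (2 ^ #n.primeFactors * ∏ p ∈ n.primeFactors, (p - 1)) :=
        Nat.mul_le_mul_left n hprod
    _ = 2 ^ #n.primeFactors * n.totient * ∏ p ∈ n.primeFactors, p := by
        rw [mul_assoc _ n.totient, Nat.totient_mul_prod_primeFactors]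
        ring

lemma card_divisors_of_squarefree {n : ℕ} (hn : Squarefree n) :
    #n.divisors = 2 ^ #n.primeFactors := by
  rw [Nat.card_divisors hn.ne_zero, ← prod_const]
  refine prod_congr rfl fun p hp => ?_
  rw [Nat.factorization_eq_one_of_squarefree hn (Nat.prime_of_mem_primeFactors hp)
    (Nat.dvd_of_mem_primeFactors hp)]

lemma pow_card_primeFactors_le (A : ℕ) (hA : 1 ≤ A) {k : ℕ} (hk : k ≠ 0) {n : ℕ} (hn : n ≠ 0) :
    (A : ℝ) ^ #n.primeFactors ≤ (A : ℝ) ^ (A ^ k) * (n : ℝ) ^ (k : ℝ)⁻¹ := by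
  rw [← prod_const, ← prod_filter_mul_prod_filter_not n.primeFactors (· < A ^ k)]
  gcongr ?_ * ?_
  · rw [prod_const]
    refine pow_le_pow_right₀ (by exact_mod_cast hA)
      ((card_le_card fun p hp => ?_).trans (card_range _).le)
    exact mem_range.mpr (mem_filter.mp hp).2
  · have hbig : ∀ p ∈ n.primeFactors.filter (¬ · < A ^ k), (A : ℝ) ≤ (p : ℝ) ^ (k : ℝ)⁻¹ := by
      intro p hp
      rw [← Real.pow_rpow_inv_natCast (Nat.cast_nonneg A) hk]
      gcongr
      exact_mod_cast not_lt.mp (mem_filter.mp hp).2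
    calc ∏ p ∈ n.primeFactors.filter (¬ · < A ^ k), (A : ℝ)
        ≤ ∏ p ∈ n.primeFactors.filter (¬ · < A ^ k), (p : ℝ) ^ (k : ℝ)⁻¹ :=
          prod_le_prod (fun _ _ => by positivity) hbig
      _ = ((∏ p ∈ n.primeFactors.filter (¬ · < A ^ k), p : ℕ) : ℝ) ^ (k : ℝ)⁻¹ := by
          push_cast
          exact Real.finsetProd_rpow _ _ (fun _ _ => by positivity) _
      _ ≤ (n : ℝ) ^ (k : ℝ)⁻¹ := by
          gcongr
          calc ∏ p ∈ n.primeFactors.filter (¬ · < A ^ k), p ≤ ∏ p ∈ n.primeFactors, p :=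
                prod_le_prod_of_subset_of_one_le' (filter_subset _ _)
                  fun p hp _ => (Nat.prime_of_mem_primeFactors hp).one_le
            _ ≤ n := Nat.le_of_dvd (Nat.pos_of_ne_zero hn) (Nat.prod_primeFactors_dvd n)

lemma divisorWeight_le (q : ℕ) :
    divisorWeight q ≤ (8 : ℝ) ^ (8 ^ 4) * (q : ℝ) ^ (-(7 / 4) : ℝ) := by
  by_cases hq : Squarefree q
  · have hq0 : (0 : ℝ) < q := by exact_mod_cast Nat.pos_of_ne_zero hq.ne_zero
    set W : ℝ := 2 ^ #q.primeFactors
    have hφ : (q : ℝ) ≤ W * q.totient := by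
      simp only [W]
      exact_mod_cast le_two_pow_card_primeFactors_mul_totient q
    have h8 : W ^ 3 ≤ (8 : ℝ) ^ (8 ^ 4) * (q : ℝ) ^ (4 : ℝ)⁻¹ := by
      have := pow_card_primeFactors_le 8 (by norm_num) (k := 4) (by norm_num) hq.ne_zero
      rw [← pow_mul, mul_comm, pow_mul]
      exact_mod_cast this
    have hφ0 : (0 : ℝ) < q.totient := by
      exact_mod_cast Nat.totient_pos.mpr (Nat.pos_of_ne_zero hq.ne_zero)
    rw [divisorWeight, ← Int.cast_pow, moebius_sq_eq_one_of_squarefree hq,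
      card_divisors_of_squarefree hq]
    push_cast
    calc 1 * W / (q.totient : ℝ) ^ 2 ≤ W ^ 3 / (q : ℝ) ^ 2 := by
          rw [div_le_div_iff₀ (by positivity) (by positivity)]
          nlinarith [mul_le_mul hφ hφ hq0.le (by positivity)]
      _ ≤ (8 : ℝ) ^ (8 ^ 4) * (q : ℝ) ^ (4 : ℝ)⁻¹ / (q : ℝ) ^ 2 := by gcongr
      _ = (8 : ℝ) ^ (8 ^ 4) * (q : ℝ) ^ (-(7 / 4) : ℝ) := by
          rw [mul_div_assoc, ← Real.rpow_sub_natCast hq0.ne']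
          norm_num
  · rw [divisorWeight, moebius_eq_zero_of_not_squarefree hq]
    simp only [Int.cast_zero, zero_pow two_ne_zero, zero_mul, zero_div]
    positivity

lemma summable_rpow_mul_divisorWeight :
    Summable fun q : ℕ => (q : ℝ) ^ (2 / 3 : ℝ) * divisorWeight q := by
  refine Summable.of_nonneg_of_le (fun q => mul_nonneg (by positivity) (divisorWeight_nonneg q))
    (fun q => ?_) ((Real.summable_nat_rpow.mpr (by norm_num : (-(13 / 12) : ℝ) < -1)).mul_left
      ((8 : ℝ) ^ (8 ^ 4)))
  calc (q : ℝ) ^ (2 / 3 : ℝ) * divisorWeight q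
      ≤ (q : ℝ) ^ (2 / 3 : ℝ) * ((8 : ℝ) ^ (8 ^ 4) * (q : ℝ) ^ (-(7 / 4) : ℝ)) := by
        gcongr
        exact divisorWeight_le q
    _ = (8 : ℝ) ^ (8 ^ 4) * (q : ℝ) ^ (-(13 / 12) : ℝ) := by
        rw [mul_left_comm, ← Real.rpow_add' (Nat.cast_nonneg q) (by norm_num)]
        norm_num

lemma summable_divisorWeight : Summable divisorWeight :=
  Summable.of_nonneg_of_le divisorWeight_nonneg divisorWeight_le
    ((Real.summable_nat_rpow.mpr (by norm_num)).mul_left _)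

lemma summable_singularMajorant {n : ℕ} (hn : n ≠ 0) : Summable (singularMajorant n) :=
  Summable.of_nonneg_of_le (singularMajorant_nonneg n) (singularMajorant_le hn)
    (summable_divisorWeight.mul_left (n : ℝ))

lemma tsum_singularTerm_prime_pow (n : ℕ) {p : ℕ} (hp : p.Prime) :
    ∑' e : ℕ, singularTerm n (p ^ e) = 1 + singularTerm n p := by
  rw [tsum_eq_sum (s := range 2) fun e he => singularTerm_prime_pow n hp (by simp at he; omega)]
  simp [sum_range_succ, singularTerm_one]

lemma hasProd_one_add_singularTerm {n : ℕ} (hn : n ≠ 0) :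
    HasProd ({p | p.Prime}.mulIndicator fun p => 1 + singularTerm n p)
      (∑' q, singularTerm n q) := by
  have hsum : Summable fun q => ‖singularTerm n q‖ :=
    Summable.of_nonneg_of_le (fun _ => norm_nonneg _)
      (fun q => (Real.norm_eq_abs _).trans_le (abs_singularTerm_le n q))
      (summable_singularMajorant hn)
  have h := EulerProduct.eulerProduct_hasProd_mulIndicator (singularTerm_one n) singularTerm_mul
    hsum (singularTerm_zero n)
  rwa [Set.mulIndicator_congr (s := {p : ℕ | p.Prime}) fun p hp =>
    tsum_singularTerm_prime_pow n hp] at h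

lemma tsum_singularTerm_eq_mul_prod {n : ℕ} (hn0 : n ≠ 0) (hn : 2 ∣ n) :
    ∑' q, singularTerm n q = twinPrimeConst * ∏ p ∈ n.primeFactors, singularFactor p := by
  set R := ∏ p ∈ n.primeFactors, singularFactor p
  have hR : R ≠ 0 := prod_ne_zero_iff.mpr fun p _ => singularFactor_ne_zero p
  -- Dividing the Euler product by the finitely many factors `singularFactor p`, `p ∣ n`, leaves
  -- the product defining `Π₂`, which in particular converges.
  set ρ : ℕ → ℝ := {p | p.Prime}.mulIndicator fun p => (if p ∣ n then singularFactor p else 1)⁻¹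
  have hρ : HasProd ρ (∏ p ∈ n.primeFactors, ρ p) := by
    refine hasProd_prod_of_ne_finset_one fun p hp => ?_
    simp only [ρ]
    by_cases hpp : p.Prime
    · rw [Set.mulIndicator_of_mem (show p ∈ {p | p.Prime} from hpp),
        if_neg fun hpn => hp (Nat.mem_primeFactors.mpr ⟨hpp, hpn, hn0⟩), inv_one]
    · exact Set.mulIndicator_of_notMem hpp _
  have hρR : ∏ p ∈ n.primeFactors, ρ p = R⁻¹ := by
    rw [← prod_inv_distrib]
    refine prod_congr rfl fun p hp => ?_
    simp only [ρ]
    rw [Set.mulIndicator_of_mem (show p ∈ {p | p.Prime} from Nat.prime_of_mem_primeFactors hp),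
      if_pos (Nat.dvd_of_mem_primeFactors hp)]
  rw [hρR] at hρ
  have ht : HasProd ({p | p.Prime}.mulIndicator twinPrimeFactor)
      ((∑' q, singularTerm n q) * R⁻¹) := by
    convert (hasProd_one_add_singularTerm hn0).mul hρ using 1
    rw [← Set.mulIndicator_mul]
    refine Set.mulIndicator_congr fun p hp => ?_
    rw [one_add_singularTerm_prime hn hp, mul_inv_cancel_right₀]
    split_ifs
    exacts [singularFactor_ne_zero p, one_ne_zero]
  have htwin : twinPrimeConst = (∑' q, singularTerm n q) * R⁻¹ :=
    (tprod_subtype {p : ℕ | p.Prime} twinPrimeFactor).trans ht.tprod_eq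
  rw [htwin, inv_mul_cancel_right₀ hR]

lemma prod_singularFactor {n : ℕ} (hn0 : n ≠ 0) (hn : 2 ∣ n) :
    ∏ p ∈ n.primeFactors, singularFactor p =
      2 * ∏ p ∈ n.primeFactors.filter (2 < ·), ((p : ℝ) - 1) / ((p : ℝ) - 2) := by
  have h2 : n.primeFactors.filter (¬ 2 < ·) = {2} := by
    ext p
    simp only [mem_filter, Nat.mem_primeFactors, mem_singleton, not_lt]
    constructor
    · rintro ⟨⟨hp, -, -⟩, hp2⟩; exact le_antisymm hp2 hp.two_le
    · rintro rfl; exact ⟨⟨Nat.prime_two, hn, hn0⟩, le_rfl⟩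
  simp only [singularFactor, prod_ite, h2, prod_singleton]
  ring

lemma singularSeries_eq_tsum {h : ℤ} (hh : h ≠ 0) (h2 : 2 ∣ h) :
    singularSeries h = ∑' q, singularTerm h.natAbs q := by
  have h2' : 2 ∣ h.natAbs := by omega
  rw [singularSeries, if_pos h2, tsum_singularTerm_eq_mul_prod (Int.natAbs_ne_zero.mpr hh) h2',
    prod_singularFactor (Int.natAbs_ne_zero.mpr hh) h2']
  ring

lemma card_filter_dvd_Icc_neg_le (N e : ℕ) :
    #{h ∈ Icc (-(N : ℤ)) N | h ≠ 0 ∧ (e : ℤ) ∣ h} ≤ 2 * (N / e) := by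
  rw [← Nat.Ioc_filter_dvd_card_eq_div]
  refine card_le_mul_card_image_of_maps_to (f := Int.natAbs) (fun h hh => ?_) 2 fun b _ => ?_
  · simp only [mem_filter, mem_Icc, mem_Ioc] at hh ⊢
    exact ⟨⟨by omega, by omega⟩, Int.natCast_dvd.mp hh.2.2⟩
  · calc #{h ∈ {h ∈ Icc (-(N : ℤ)) N | h ≠ 0 ∧ (e : ℤ) ∣ h} | h.natAbs = b}
        ≤ #({(b : ℤ), -(b : ℤ)} : Finset ℤ) := card_le_card fun h hh => by
          simp only [mem_filter, mem_insert, mem_singleton] at hh ⊢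
          omega
      _ ≤ 2 := card_le_two


lemma sum_idOfDvd_natAbs_le (N d : ℕ) :
    ∑ h ∈ Icc (-(N : ℤ)) N with h ≠ 0, idOfDvd h.natAbs d ≤ 2 * N := by
  calc ∑ h ∈ Icc (-(N : ℤ)) N with h ≠ 0, idOfDvd h.natAbs d
      = (#{h ∈ Icc (-(N : ℤ)) N | h ≠ 0 ∧ (d : ℤ) ∣ h} : ℤ) * d := by
        simp only [idOfDvd_apply, ← Int.natCast_dvd]
        rw [← sum_filter, sum_const, nsmul_eq_mul, filter_filter]
    _ ≤ ((2 * (N / d) : ℕ) : ℤ) * d := by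
        gcongr
        exact card_filter_dvd_Icc_neg_le N d
    _ ≤ 2 * N := by
        have : 2 * (N / d) * d ≤ 2 * N := by
          rw [mul_assoc]
          exact Nat.mul_le_mul_left 2 (Nat.div_mul_le_self N d)
        exact_mod_cast this

lemma sum_singularMajorant_le (N q : ℕ) :
    ∑ h ∈ Icc (-(N : ℤ)) N with h ≠ 0, singularMajorant h.natAbs q ≤ 2 * N * divisorWeight q := by
  have hsum : ∑ h ∈ Icc (-(N : ℤ)) N with h ≠ 0, ∑ d ∈ q.divisors, idOfDvd h.natAbs d
      ≤ #q.divisors * (2 * N) := by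
    rw [sum_comm]
    simpa using sum_le_card_nsmul _ _ _ fun d _ => sum_idOfDvd_natAbs_le N d
  calc ∑ h ∈ Icc (-(N : ℤ)) N with h ≠ 0, singularMajorant h.natAbs q
      = (μ q : ℝ) ^ 2 * ((∑ h ∈ Icc (-(N : ℤ)) N with h ≠ 0, ∑ d ∈ q.divisors,
          idOfDvd h.natAbs d : ℤ) : ℝ) / (q.totient : ℝ) ^ 2 := by
        simp only [singularMajorant, ← sum_div, ← mul_sum, Int.cast_sum]
    _ ≤ (μ q : ℝ) ^ 2 * ((#q.divisors * (2 * N) : ℤ) : ℝ) / (q.totient : ℝ) ^ 2 := by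
        gcongr
    _ = 2 * N * divisorWeight q := by
        unfold divisorWeight
        push_cast
        ring

lemma tsum_nat_add_le_rpow_mul_tsum {f : ℕ → ℝ} (hf : ∀ q, 0 ≤ f q) {a : ℝ} (ha : 0 ≤ a)
    (hs : Summable fun q : ℕ => (q : ℝ) ^ a * f q) {Q : ℝ} (hQ : 0 < Q) {M : ℕ} (hM : Q ≤ M) :
    ∑' i, f (i + M) ≤ Q ^ (-a) * ∑' q : ℕ, (q : ℝ) ^ a * f q := by
  have hpt : ∀ i : ℕ, f (i + M) ≤ Q ^ (-a) * (((i + M : ℕ) : ℝ) ^ a * f (i + M)) := by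
    intro i
    have hQq : Q ^ a ≤ ((i + M : ℕ) : ℝ) ^ a :=
      Real.rpow_le_rpow hQ.le (hM.trans (by exact_mod_cast Nat.le_add_left M i)) ha
    rw [← mul_assoc, Real.rpow_neg hQ.le]
    exact le_mul_of_one_le_left (hf _) ((one_le_inv_mul₀ (by positivity)).mpr hQq)
  have hs' := (summable_nat_add_iff M).mpr hs
  calc ∑' i, f (i + M) ≤ ∑' i : ℕ, Q ^ (-a) * (((i + M : ℕ) : ℝ) ^ a * f (i + M)) :=
        Summable.tsum_le_tsum hpt
          ((hs'.mul_left _).of_nonneg_of_le (fun i => hf _) hpt) (hs'.mul_left _)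
    _ = Q ^ (-a) * ∑' i : ℕ, ((i + M : ℕ) : ℝ) ^ a * f (i + M) := tsum_mul_left
    _ ≤ Q ^ (-a) * ∑' q : ℕ, (q : ℝ) ^ a * f q := by
        refine mul_le_mul_of_nonneg_left ?_ (by positivity)
        rw [← hs.sum_add_tsum_nat_add M]
        exact le_add_of_nonneg_left (sum_nonneg fun q _ => mul_nonneg (by positivity) (hf q))

lemma abs_sum_range_sub_tsum_le {g b : ℕ → ℝ} (hgb : ∀ q, |g q| ≤ b q) (hb : Summable b) (k : ℕ) :
    |∑ q ∈ range k, g q - ∑' q, g q| ≤ ∑' i, b (i + k) := by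
  have hg : Summable g := hb.of_norm_bounded hgb
  rw [← hg.sum_add_tsum_nat_add k, sub_add_cancel_left, abs_neg]
  exact tsum_of_norm_bounded (f := fun i => g (i + k)) ((summable_nat_add_iff k).mpr hb).hasSum
    fun i => hgb (i + k)

lemma sum_Icc_one_eq_sum_range {M : Type*} [AddCommMonoid M] {f : ℕ → M} (hf : f 0 = 0) (n : ℕ) :
    ∑ q ∈ Icc 1 n, f q = ∑ q ∈ range (n + 1), f q := by
  rw [Nat.range_eq_Icc_zero_sub_one _ (n.add_one_ne_zero), Nat.add_sub_cancel,
    ← insert_Icc_add_one_left_eq_Icc (Nat.zero_le n), sum_insert (by simp), hf, zero_add, zero_add]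

lemma sum_ramanujanSum_eq_sum_singularTerm (h : ℤ) (M : ℕ) :
    (∑ q ∈ Icc 1 M, ((μ q : ℤ) : ℂ) ^ 2 * ramanujanSum q (-h) / ((q.totient : ℕ) : ℂ) ^ 2) =
      ((∑ q ∈ Icc 1 M, singularTerm h.natAbs q : ℝ) : ℂ) := by
  push_cast
  refine sum_congr rfl fun q hq => ?_
  rw [ramanujanSum_eq_moebius_mul_idOfDvd (by simp at hq; omega), Int.natAbs_neg, singularTerm]
  push_cast
  rfl

lemma abs_sum_singularTerm_sub_singularSeries_le {h : ℤ} (hh : h ≠ 0) (h2 : 2 ∣ h) (M : ℕ) :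
    |∑ q ∈ Icc 1 M, singularTerm h.natAbs q - singularSeries h| ≤
      ∑' i, singularMajorant h.natAbs (i + (M + 1)) := by
  rw [sum_Icc_one_eq_sum_range (singularTerm_zero _), singularSeries_eq_tsum hh h2]
  exact abs_sum_range_sub_tsum_le (abs_singularTerm_le _)
    (summable_singularMajorant (Int.natAbs_ne_zero.mpr hh)) _

lemma card_mul_le_of_forall_lt_abs_sub_singularSeries {Q : ℝ} (hQ : 0 < Q) (N : ℕ) (ε : ℝ)
    {B : Finset ℤ}
    (hB : ∀ h ∈ B, h ∈ Icc (-(N : ℤ)) N ∧ h ≠ 0 ∧ 2 ∣ h ∧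
      ε < |∑ q ∈ Icc 1 ⌊Q⌋₊, singularTerm h.natAbs q - singularSeries h|) :
    #B * ε ≤ 2 * N * (Q ^ (-(2 / 3) : ℝ) * ∑' q : ℕ, (q : ℝ) ^ (2 / 3 : ℝ) * divisorWeight q) := by
  set M := ⌊Q⌋₊ + 1
  have hM : Q ≤ M := by
    simp only [M]
    push_cast
    exact (Nat.lt_floor_add_one Q).le
  have htail : ∀ h ∈ ({h ∈ Icc (-(N : ℤ)) N | h ≠ 0} : Finset ℤ),
      Summable fun i => singularMajorant h.natAbs (i + M) :=
    fun h hh => (summable_nat_add_iff M).mpr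
      (summable_singularMajorant (Int.natAbs_ne_zero.mpr (mem_filter.mp hh).2))
  calc #B * ε ≤ ∑ h ∈ B, ∑' i, singularMajorant h.natAbs (i + M) := by
        rw [← nsmul_eq_mul]
        exact card_nsmul_le_sum _ _ _ fun h hh => (hB h hh).2.2.2.le.trans
          (abs_sum_singularTerm_sub_singularSeries_le (hB h hh).2.1 (hB h hh).2.2.1 _)
    _ ≤ ∑ h ∈ Icc (-(N : ℤ)) N with h ≠ 0, ∑' i, singularMajorant h.natAbs (i + M) :=
        sum_le_sum_of_subset_of_nonneg (fun h hh => mem_filter.mpr ⟨(hB h hh).1, (hB h hh).2.1⟩)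
          fun h _ _ => tsum_nonneg fun i => singularMajorant_nonneg _ _
    _ = ∑' i, ∑ h ∈ Icc (-(N : ℤ)) N with h ≠ 0, singularMajorant h.natAbs (i + M) :=
        (Summable.tsum_finsetSum htail).symm
    _ ≤ ∑' i, 2 * N * divisorWeight (i + M) :=
        Summable.tsum_le_tsum (fun i => sum_singularMajorant_le N _) (summable_sum htail)
          (((summable_nat_add_iff M).mpr summable_divisorWeight).mul_left _)
    _ = 2 * N * ∑' i, divisorWeight (i + M) := tsum_mul_left
    _ ≤ _ := mul_le_mul_of_nonneg_left (tsum_nat_add_le_rpow_mul_tsum divisorWeight_nonneg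
        (by norm_num) summable_rpow_mul_divisorWeight hQ hM) (by positivity)

lemma exists_card_exceptional_le : ∃ C : ℝ, 0 < C ∧ ∀ Q : ℝ, 0 < Q → ∀ H : ℝ, 2 ≤ H →
    (((Finset.Icc (-⌊H⌋) ⌊H⌋).filter fun h : ℤ =>
        h ≠ 0 ∧ 2 ∣ h ∧
          ¬ ‖
              ((∑ q ∈ Finset.Icc 1 ⌊Q⌋₊,
                  ((ArithmeticFunction.moebius q : ℤ) : ℂ) ^ 2 * ramanujanSum q (-h) /
                    ((Nat.totient q : ℕ) : ℂ) ^ 2) -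
                ((singularSeries h : ℝ) : ℂ))‖ ≤
            C * Q ^ (-(1 : ℝ) / 3) * Real.log H).card : ℝ) ≤
      C * H * Q ^ (-(1 : ℝ) / 3) := by
  set K := ∑' q : ℕ, (q : ℝ) ^ (2 / 3 : ℝ) * divisorWeight q
  have hK : 0 ≤ K := tsum_nonneg fun q => mul_nonneg (by positivity) (divisorWeight_nonneg q)
  refine ⟨4 * K + 1, by positivity, fun Q hQ H hH => ?_⟩
  set C := 4 * K + 1
  set r := Q ^ (-(1 : ℝ) / 3)
  have hr : 0 < r := Real.rpow_pos_of_pos hQ _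
  have hlog : 1 / 2 ≤ Real.log H :=
    le_trans (by linarith [Real.log_two_gt_d9]) (Real.log_le_log (by norm_num) hH)
  have hε : 0 < C * r * Real.log H := by positivity
  have hfloor : ⌊H⌋ = ((⌊H⌋₊ : ℕ) : ℤ) := (Int.natCast_floor_eq_floor (by linarith)).symm
  refine le_of_mul_le_mul_right
    ((card_mul_le_of_forall_lt_abs_sub_singularSeries hQ ⌊H⌋₊ _ fun h hh => ?_).trans ?_) hε
  · obtain ⟨hI, h0, h2, hbad⟩ := mem_filter.mp hh
    rw [sum_ramanujanSum_eq_sum_singularTerm, ← Complex.ofReal_sub, Complex.norm_real,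
      Real.norm_eq_abs] at hbad
    exact ⟨hfloor ▸ hI, h0, h2, not_le.mp hbad⟩
  have hsplit : Q ^ (-(2 / 3) : ℝ) = r * r := by
    rw [← Real.rpow_add hQ]
    norm_num
  have hNH : (⌊H⌋₊ : ℝ) ≤ H := Nat.floor_le (by linarith)
  have hC : 4 * K ≤ C * C := by nlinarith
  rw [hsplit]
  calc 2 * ⌊H⌋₊ * (r * r * K) ≤ 2 * H * (r * r * K) := by gcongr
    _ = 4 * K * (H * r * r) * (1 / 2) := by ring
    _ ≤ C * C * (H * r * r) * Real.log H := by gcongr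
    _ = C * H * r * (C * r * Real.log H) := by ring

/-- Lemma 5.2: the singular series lemma. -/
theorem singular_series_sum :
    ∀ A' : ℝ, 0 < A' → ∃ C : ℝ, 0 < C ∧
      ∀ᶠ X : ℝ in atTop, ∀ H : ℝ, 2 ≤ H →
        (((Finset.Icc (-⌊H⌋) ⌊H⌋).filter fun h : ℤ =>
            h ≠ 0 ∧ 2 ∣ h ∧
              ¬ ‖
                  ((∑ q ∈ Finset.Icc 1 ⌊(Real.log X) ^ A'⌋₊,
                      ((ArithmeticFunction.moebius q : ℤ) : ℂ) ^ 2 * ramanujanSum q (-h) /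
                        ((Nat.totient q : ℕ) : ℂ) ^ 2) -
                    ((singularSeries h : ℝ) : ℂ))‖ ≤
                C * ((Real.log X) ^ A') ^ (-(1 : ℝ) / 3) * Real.log H).card : ℝ) ≤
          C * H * ((Real.log X) ^ A') ^ (-(1 : ℝ) / 3) := by
  intro A' _
  obtain ⟨C, hC, hcard⟩ := exists_card_exceptional_le
  refine ⟨C, hC, ?_⟩
  filter_upwards [Real.tendsto_log_atTop.eventually_gt_atTop 0] with X hX
  exact hcard _ (Real.rpow_pos_of_pos hX A')
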